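/- arXiv:2007.12762 — 2 statements merged into one kernel-verified Lean document; each statement's English description precedes it below -/
import Mathlib

section
/- Let X and Y be strings over an alphabet Σ and let k ≥ 0 be an integer. Suppose d'_0,…,d'_{k+1} and d_0,…,d_k are natural numbers satisfying: d'_0 = 0; for each i ∈ [0..k], max_{δ=−k}^{k} LCE_0^{X,Y}(d'_i, d'_i+δ) ≤ d_i − d'_i ≤ max_{δ=−k}^{k} LCE_k^{X,Y}(d'_i, d'_i+δ); and d'_{i+1} = min(|X|, d_i + 1) for each i ∈ [0..k]. Then each i ∈ [0..k] has the following properties: (a) ED(X[0..d'_i), Y[0..y)) ≤ (3k+1)·i + k for every integer y with d'_i − k ≤ y ≤ d'_i + k and 0 ≤ y ≤ |Y|; (b) ED(X[0..d_i), Y[0..y)) ≤ (3k+1)·i + 4k for every integer y with d_i − k ≤ y ≤ d_i + k and 0 ≤ y ≤ |Y|. -/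
/-- Hamming distance (number of mismatching positions) between two strings. -/
def HD {α : Type*} [DecidableEq α] (X Y : List α) : ℕ :=
  ((X.zip Y).filter fun p => p.1 ≠ p.2).length

/-- `LCE k X Y x y` is the largest `ℓ` with `HD (X[x..x+ℓ)) (Y[y..y+ℓ)) ≤ k`
(in particular `ℓ ≤ min (|X|-x) (|Y|-y)`) when `0 ≤ x ≤ |X|` and `0 ≤ y ≤ |Y|`,
and `0` otherwise. -/
def LCE {α : Type*} [DecidableEq α] (k : ℕ) (X Y : List α) (x y : ℤ) : ℕ :=
  if 0 ≤ x ∧ x ≤ X.length ∧ 0 ≤ y ∧ y ≤ Y.length then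
    Nat.findGreatest
      (fun ℓ => ℓ ≤ X.length - x.toNat ∧ ℓ ≤ Y.length - y.toNat ∧
        HD ((X.drop x.toNat).take ℓ) ((Y.drop y.toNat).take ℓ) ≤ k)
      (min (X.length - x.toNat) (Y.length - y.toNat))
  else 0

/-- Costs for the Levenshtein distance (ported from the former `Mathlib.Data.List.EditDistance.Defs`). -/
structure Levenshtein.Cost (α β δ : Type*) where
  delete : α → δ
  insert : β → δ
  substitute : α → β → δ

/-- The default unit costs (ported from former Mathlib). -/
def Levenshtein.defaultCost {α : Type*} [DecidableEq α] : Levenshtein.Cost α α ℕ where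
  delete _ := 1
  insert _ := 1
  substitute a b := if a = b then 0 else 1

/-- Auxiliary step (ported from former Mathlib). -/
def Levenshtein.impl {α β δ : Type*} [AddZeroClass δ] [Min δ] (C : Levenshtein.Cost α β δ)
    (xs : List α) (y : β) (d : {r : List δ // 0 < r.length}) : {r : List δ // 0 < r.length} :=
  let ⟨ds, w⟩ := d
  xs.zip (ds.zip ds.tail) |>.foldr
    (init := ⟨[C.insert y + ds.getLast (List.ne_nil_of_length_pos w)], by simp⟩)
    (fun ⟨x, d₀, d₁⟩ ⟨r, w⟩ =>
      ⟨min (C.delete x + r[0]) (min (C.insert y + d₀) (C.substitute x y + d₁)) :: r, by simp⟩)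

/-- Suffix Levenshtein distances (ported from former Mathlib). -/
def suffixLevenshtein {α β δ : Type*} [AddZeroClass δ] [Min δ] (C : Levenshtein.Cost α β δ)
    (xs : List α) (ys : List β) : {r : List δ // 0 < r.length} :=
  ys.foldr
    (Levenshtein.impl C xs)
    (xs.foldr (init := ⟨[0], by simp⟩) (fun a ⟨r, w⟩ => ⟨(C.delete a + r[0]) :: r, by simp⟩))

/-- Levenshtein distance (ported from former Mathlib). -/
def levenshtein {α β δ : Type*} [AddZeroClass δ] [Min δ] (C : Levenshtein.Cost α β δ)
    (xs : List α) (ys : List β) : δ :=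
  let ⟨r, w⟩ := suffixLevenshtein C xs ys
  r[0]

/-- Edit (Levenshtein) distance. -/
def ED {α : Type*} [DecidableEq α] (X Y : List α) : ℕ :=
  levenshtein Levenshtein.defaultCost X Y


section LevPort
variable {α β δ : Type*} [AddZeroClass δ] [Min δ] (C : Levenshtein.Cost α β δ)

@[simp] theorem Levenshtein.defaultCost_delete {α : Type*} [DecidableEq α] (a : α) :
    (Levenshtein.defaultCost : Levenshtein.Cost α α ℕ).delete a = 1 := rfl

@[simp] theorem Levenshtein.defaultCost_insert {α : Type*} [DecidableEq α] (a : α) :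
    (Levenshtein.defaultCost : Levenshtein.Cost α α ℕ).insert a = 1 := rfl

@[simp] theorem Levenshtein.defaultCost_substitute {α : Type*} [DecidableEq α] (a b : α) :
    (Levenshtein.defaultCost : Levenshtein.Cost α α ℕ).substitute a b = if a = b then 0 else 1 := rfl

theorem Levenshtein.impl_cons' (x : α) (xs : List α) (y : β) (d : δ)
    (t : {r : List δ // 0 < r.length}) (h) :
    (Levenshtein.impl C (x :: xs) y ⟨d :: t.1, h⟩).1 =
      min (C.delete x + (Levenshtein.impl C xs y t).1[0]'(Levenshtein.impl C xs y t).2)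
        (min (C.insert y + d) (C.substitute x y + t.1[0]'t.2)) :: (Levenshtein.impl C xs y t).1 := by
  obtain ⟨ds, w'⟩ := t
  match ds, w' with | _ :: _, _ => rfl

theorem Levenshtein.impl_length (xs : List α) (y : β) (d : {r : List δ // 0 < r.length})
    (w : d.1.length = xs.length + 1) :
    (Levenshtein.impl C xs y d).1.length = xs.length + 1 := by
  induction xs generalizing d with
  | nil => rfl
  | cons x xs ih =>
    dsimp [Levenshtein.impl]
    match d, w with
    | ⟨d₁ :: d₂ :: ds, _⟩, w =>
      dsimp
      congr 1
      exact ih ⟨d₂ :: ds, (by simp)⟩ (by simpa using w)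

theorem suffixLevenshtein_length (xs : List α) (ys : List β) :
    (suffixLevenshtein C xs ys).1.length = xs.length + 1 := by
  induction ys with
  | nil =>
    dsimp [suffixLevenshtein]
    induction xs with
    | nil => rfl
    | cons _ xs ih => simp_all
  | cons y ys ih =>
    dsimp [suffixLevenshtein]
    rw [Levenshtein.impl_length]
    exact ih

theorem suffixLevenshtein_cons₂ (xs : List α) (y : β) (ys : List β) :
    suffixLevenshtein C xs (y :: ys) = (Levenshtein.impl C xs) y (suffixLevenshtein C xs ys) := rfl

theorem suffixLevenshtein_cons₁_aux {α} {x y : {r : List α // 0 < r.length}}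
    (w₀ : x.1[0]'x.2 = y.1[0]'y.2) (w : x.1.tail = y.1.tail) : x = y := by
  match x, y with
  | ⟨hx :: tx, _⟩, ⟨hy :: ty, _⟩ => simp_all

theorem suffixLevenshtein_cons₁ (x : α) (xs : List α) (ys : List β) :
    suffixLevenshtein C (x :: xs) ys =
      ⟨levenshtein C (x :: xs) ys :: (suffixLevenshtein C xs ys).1, by simp⟩ := by
  induction ys with
  | nil => rfl
  | cons y ys ih =>
    apply suffixLevenshtein_cons₁_aux
    · rfl
    · rw [suffixLevenshtein_cons₂ (xs := x :: xs), ih]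
      show _ = (suffixLevenshtein C xs (y :: ys)).1
      rw [Levenshtein.impl_cons']
      rfl

@[simp] theorem levenshtein_nil_nil : levenshtein C ([] : List α) ([] : List β) = 0 := rfl

@[simp] theorem levenshtein_nil_cons (y : β) (ys : List β) :
    levenshtein C ([] : List α) (y :: ys) = C.insert y + levenshtein C [] ys := by
  have hl := suffixLevenshtein_length C [] ys
  unfold levenshtein
  rw [suffixLevenshtein_cons₂]
  generalize suffixLevenshtein C [] ys = t at hl ⊢
  obtain ⟨r, hr⟩ := t
  match r, hr, hl with
  | [a], _, _ => rfl
  | _ :: _ :: _, _, h => simp at h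

@[simp] theorem levenshtein_cons_nil (x : α) (xs : List α) :
    levenshtein C (x :: xs) ([] : List β) = C.delete x + levenshtein C xs [] := rfl

theorem levenshtein_cons_cons (x : α) (xs : List α) (y : β) (ys : List β) :
    levenshtein C (x :: xs) (y :: ys) =
      min (C.delete x + levenshtein C xs (y :: ys))
        (min (C.insert y + levenshtein C (x :: xs) ys)
          (C.substitute x y + levenshtein C xs ys)) := by
  have key : ∀ (X : List α) (Y : List β),
      levenshtein C X Y = (suffixLevenshtein C X Y).1[0]'(suffixLevenshtein C X Y).2 :=
    fun _ _ => rfl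
  have hL : (suffixLevenshtein C (x :: xs) (y :: ys)).1 =
      min (C.delete x + levenshtein C xs (y :: ys))
        (min (C.insert y + levenshtein C (x :: xs) ys)
          (C.substitute x y + levenshtein C xs ys)) ::
        (Levenshtein.impl C xs y (suffixLevenshtein C xs ys)).1 := by
    rw [suffixLevenshtein_cons₂, suffixLevenshtein_cons₁, Levenshtein.impl_cons']
    rfl
  rw [key (x :: xs) (y :: ys)]
  simp only [hL, List.getElem_cons_zero]

end LevPort


section Lemmas
variable {α : Type*} [DecidableEq α]

variable {α : Type*} [DecidableEq α]

theorem ED_nil_left (Y : List α) : ED ([] : List α) Y = Y.length := by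
  induction Y with
  | nil => simp [ED]
  | cons y ys ih => simp [ED] at ih ⊢; omega

theorem ED_nil_right (X : List α) : ED X ([] : List α) = X.length := by
  induction X with
  | nil => simp [ED]
  | cons x xs ih => simp [ED] at ih ⊢; omega

theorem ED_ins (X : List α) (y : α) (Y : List α) : ED X (y :: Y) ≤ 1 + ED X Y := by
  cases X with
  | nil => simp [ED]
  | cons x xs =>
    simp only [ED, levenshtein_cons_cons, Levenshtein.defaultCost_delete,
      Levenshtein.defaultCost_insert, Levenshtein.defaultCost_substitute]
    omega

theorem ED_del (x : α) (X Y : List α) : ED (x :: X) Y ≤ 1 + ED X Y := by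
  cases Y with
  | nil => simp [ED]
  | cons y ys =>
    simp only [ED, levenshtein_cons_cons, Levenshtein.defaultCost_delete,
      Levenshtein.defaultCost_insert, Levenshtein.defaultCost_substitute]
    omega

theorem ED_sub (x y : α) (X Y : List α) :
    ED (x :: X) (y :: Y) ≤ (if x = y then 0 else 1) + ED X Y := by
  simp only [ED, levenshtein_cons_cons, Levenshtein.defaultCost_delete,
    Levenshtein.defaultCost_insert, Levenshtein.defaultCost_substitute]
  omega

theorem ED_append : ∀ (A B C D : List α), ED (A ++ C) (B ++ D) ≤ ED A B + ED C D := by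
  intro A
  induction A with
  | nil =>
    intro B
    induction B with
    | nil => simp [ED_nil_left]
    | cons b B ihB =>
      intro C D
      have h1 : ED C (B ++ D) ≤ ED [] B + ED C D := by
        simpa using ihB C D
      have h2 : ED C (b :: (B ++ D)) ≤ 1 + ED C (B ++ D) := ED_ins ..
      simp only [List.nil_append, List.cons_append] at *
      rw [ED_nil_left] at *
      simp at *
      omega
  | cons a A ihA =>
    intro B
    induction B with
    | nil =>
      intro C D
      have h1 : ED (A ++ C) D ≤ ED A [] + ED C D := by simpa using ihA [] C D
      have h2 : ED (a :: (A ++ C)) D ≤ 1 + ED (A ++ C) D := ED_del ..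
      rw [ED_nil_right] at *
      simp only [List.cons_append, List.nil_append, List.length_cons] at *
      omega
    | cons b B ihB =>
      intro C D
      have h1 : ED (A ++ C) ((b :: B) ++ D) ≤ ED A (b :: B) + ED C D := ihA _ _ _
      have h2 : ED ((a :: A) ++ C) (B ++ D) ≤ ED (a :: A) B + ED C D := ihB _ _
      have h3 : ED (A ++ C) (B ++ D) ≤ ED A B + ED C D := ihA _ _ _
      simp only [List.cons_append] at *
      simp only [ED, levenshtein_cons_cons, Levenshtein.defaultCost_delete,
        Levenshtein.defaultCost_insert, Levenshtein.defaultCost_substitute] at *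
      omega

theorem le_ED_add (X : List α) : ∀ Y : List α, X.length ≤ ED X Y + Y.length := by
  induction X with
  | nil => simp
  | cons x X ihX =>
    intro Y
    induction Y with
    | nil => rw [ED_nil_right]; simp
    | cons y Y ihY =>
      have h1 := ihX (y :: Y)
      have h2 := ihX Y
      simp only [ED, levenshtein_cons_cons, Levenshtein.defaultCost_delete,
        Levenshtein.defaultCost_insert, Levenshtein.defaultCost_substitute,
        List.length_cons] at *
      omega

theorem ED_take_prefix (E : List α) : ∀ (X Y : List α), ED X Y ≤ ED X (Y ++ E) + E.length := by
  intro X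
  induction X with
  | nil => intro Y; rw [ED_nil_left, ED_nil_left]; simp; omega
  | cons x X ihX =>
    intro Y
    induction Y with
    | nil =>
      have := le_ED_add (x :: X) E
      rw [ED_nil_right]
      simp only [List.nil_append, List.length_cons] at *
      omega
    | cons y Y ihY =>
      have hdel : ED (x :: X) (y :: Y) ≤ 1 + ED X (y :: Y) := ED_del ..
      have hins : ED (x :: X) (y :: Y) ≤ 1 + ED (x :: X) Y := by
        have := ED_ins (x :: X) y Y
        have h1 : ED (x :: X) (y :: Y) ≤ 1 + ED (x :: X) Y := by
          simp only [ED, levenshtein_cons_cons, Levenshtein.defaultCost_delete,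
            Levenshtein.defaultCost_insert, Levenshtein.defaultCost_substitute]
          omega
        exact h1
      have hsub : ED (x :: X) (y :: Y) ≤ (if x = y then 0 else 1) + ED X Y := ED_sub ..
      have h1 := ihX (y :: Y)
      have h2 := ihX Y
      simp only [List.cons_append] at *
      conv_rhs => rw [ED]
      rw [levenshtein_cons_cons]
      simp only [ED, Levenshtein.defaultCost_delete,
        Levenshtein.defaultCost_insert, Levenshtein.defaultCost_substitute] at *
      omega

theorem ED_le_HD : ∀ (A B : List α),
    ED A B ≤ HD A B + (A.length - B.length) + (B.length - A.length) := by
  intro A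
  induction A with
  | nil => intro B; rw [ED_nil_left]; simp [HD]
  | cons a A ihA =>
    intro B
    cases B with
    | nil => rw [ED_nil_right]; simp [HD]
    | cons b B =>
      have h1 := ED_sub a b A B
      have h2 := ihA B
      have h3 : HD (a :: A) (b :: B) = (if a = b then 0 else 1) + HD A B := by
        simp [HD, List.filter_cons]
        split_ifs <;> simp_all <;> omega
      simp only [List.length_cons] at *
      omega

theorem HD_take (m : ℕ) (U V : List α) : HD (U.take m) (V.take m) ≤ HD U V := by
  have hz : (U.take m).zip (V.take m) = (U.zip V).take m := by
    simp [List.zip, List.take_zipWith]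
  unfold HD
  rw [hz]
  exact List.Sublist.length_le (List.Sublist.filter _ (List.take_sublist _ _))

theorem ED_single (a b : α) : ED [a] [b] ≤ 1 := by
  simp only [ED, levenshtein_cons_cons, Levenshtein.defaultCost_delete,
    Levenshtein.defaultCost_insert, Levenshtein.defaultCost_substitute,
    levenshtein_nil_nil, levenshtein_nil_cons, levenshtein_cons_nil]
  split_ifs <;> omega

theorem ED_take_take (X Y : List α) (s t : ℕ) (hs : s ≤ Y.length) (ht : t ≤ Y.length) :
    ED X (Y.take s) ≤ ED X (Y.take t) + (s - t) + (t - s) := by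
  rcases le_total s t with h | h
  · have hdec : Y.take t = Y.take s ++ ((Y.drop s).take (t - s)) := by
      rw [← List.take_add]; congr 1; omega
    have hlen : ((Y.drop s).take (t - s)).length = t - s := by
      simp; omega
    have hpre := ED_take_prefix ((Y.drop s).take (t - s)) X (Y.take s)
    rw [← hdec, hlen] at hpre
    omega
  · have hYdec : Y.take s = Y.take t ++ ((Y.drop t).take (s - t)) := by
      rw [← List.take_add]; congr 1; omega
    have hlen : ((Y.drop t).take (s - t)).length = s - t := by
      simp; omega
    calc ED X (Y.take s) = ED (X ++ []) (Y.take t ++ (Y.drop t).take (s - t)) := by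
          rw [List.append_nil, ← hYdec]
      _ ≤ ED X (Y.take t) + ED ([] : List α) ((Y.drop t).take (s - t)) := ED_append ..
      _ = ED X (Y.take t) + (s - t) := by rw [ED_nil_left, hlen]
      _ ≤ _ := by omega
end Lemmas

theorem stmt1 {α : Type*} [DecidableEq α] (X Y : List α) (k : ℕ)
    (d' d : ℕ → ℕ)
    (h0 : d' 0 = 0)
    (hlow : ∀ i ≤ k,
      d' i + (Finset.Icc (-(k : ℤ)) (k : ℤ)).sup
        (fun δ => LCE 0 X Y (d' i) ((d' i : ℤ) + δ)) ≤ d i)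
    (hhigh : ∀ i ≤ k,
      d i ≤ d' i + (Finset.Icc (-(k : ℤ)) (k : ℤ)).sup
        (fun δ => LCE k X Y (d' i) ((d' i : ℤ) + δ)))
    (hstep : ∀ i ≤ k, d' (i + 1) = min X.length (d i + 1)) :
    ∀ i ≤ k,
      (∀ y : ℕ, (d' i : ℤ) - k ≤ (y : ℤ) → (y : ℤ) ≤ (d' i : ℤ) + k → y ≤ Y.length →
        ED (X.take (d' i)) (Y.take y) ≤ (3 * k + 1) * i + k) ∧
      (∀ y : ℕ, (d i : ℤ) - k ≤ (y : ℤ) → (y : ℤ) ≤ (d i : ℤ) + k → y ≤ Y.length →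
        ED (X.take (d i)) (Y.take y) ≤ (3 * k + 1) * i + 4 * k) := by
  have hd'X : ∀ i, i ≤ k → d' i ≤ X.length := by
    intro i hi
    cases i with
    | zero => simp [h0]
    | succ j => rw [hstep j (by omega)]; exact min_le_left _ _
  have hLCEle : ∀ (kk x : ℕ) (y : ℤ), LCE kk X Y (x : ℤ) y ≤ X.length - x := by
    intro kk x y
    unfold LCE
    split
    · refine le_trans (Nat.findGreatest_le _) ?_
      simp only [Int.toNat_natCast]
      exact min_le_left _ _
    · exact Nat.zero_le _
  have hdX : ∀ i, i ≤ k → d i ≤ X.length := by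
    intro i hi
    have h1 := hhigh i hi
    have h2 : (Finset.Icc (-(k : ℤ)) (k : ℤ)).sup
        (fun δ => LCE k X Y (d' i) ((d' i : ℤ) + δ)) ≤ X.length - d' i :=
      Finset.sup_le fun δ _ => hLCEle k (d' i) _
    have h3 := hd'X i hi
    omega
  have hd'd : ∀ i, i ≤ k → d' i ≤ d i := fun i hi =>
    le_trans (Nat.le_add_right _ _) (hlow i hi)
  have keyB : ∀ i, i ≤ k →
      (∀ y : ℕ, (d' i : ℤ) - k ≤ (y : ℤ) → (y : ℤ) ≤ (d' i : ℤ) + k → y ≤ Y.length →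
        ED (X.take (d' i)) (Y.take y) ≤ (3 * k + 1) * i + k) →
      (∀ y : ℕ, (d i : ℤ) - k ≤ (y : ℤ) → (y : ℤ) ≤ (d i : ℤ) + k → y ≤ Y.length →
        ED (X.take (d i)) (Y.take y) ≤ (3 * k + 1) * i + 4 * k) := by
    intro i hi hA
    obtain ⟨δ, hδmem, hδ⟩ := Finset.exists_mem_eq_sup (Finset.Icc (-(k : ℤ)) (k : ℤ))
      ⟨0, by simp⟩ (fun δ => LCE k X Y (d' i) ((d' i : ℤ) + δ))
    rw [Finset.mem_Icc] at hδmem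
    set L := LCE k X Y (d' i) ((d' i : ℤ) + δ) with hLdef
    have hdle : d i ≤ d' i + L := by rw [← hδ] at *; exact hhigh i hi
    have hd'di := hd'd i hi
    by_cases hcase : d i = d' i
    · intro y h1 h2 h3
      rw [hcase]
      have := hA y (by omega) (by omega) h3
      omega
    · have hLpos : 0 < L := by omega
      have hcond : 0 ≤ ((d' i : ℕ) : ℤ) ∧ ((d' i : ℕ) : ℤ) ≤ (X.length : ℤ) ∧
          0 ≤ ((d' i : ℕ) : ℤ) + δ ∧ ((d' i : ℕ) : ℤ) + δ ≤ (Y.length : ℤ) := by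
        by_contra hc
        have : L = 0 := by rw [hLdef]; unfold LCE; rw [if_neg hc]
        omega
      obtain ⟨hc1, hc2, hc3, hc4⟩ := hcond
      set d'' : ℕ := (((d' i : ℕ) : ℤ) + δ).toNat with hd''def
      have hd''cast : (d'' : ℤ) = ((d' i : ℕ) : ℤ) + δ := Int.toNat_of_nonneg hc3
      have hPL : L ≤ X.length - d' i ∧ L ≤ Y.length - d'' ∧
          HD ((X.drop (d' i)).take L) ((Y.drop d'').take L) ≤ k := by
        rw [hLdef]
        unfold LCE
        rw [if_pos ⟨hc1, hc2, hc3, hc4⟩]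
        simp only [Int.toNat_natCast, ← hd''def]
        refine Nat.findGreatest_spec (P := fun ℓ => ℓ ≤ X.length - d' i ∧
          ℓ ≤ Y.length - d'' ∧
          HD ((X.drop (d' i)).take ℓ) ((Y.drop d'').take ℓ) ≤ k) (Nat.zero_le _) ?_
        simp [HD]
      obtain ⟨hP1, hP2, hP3⟩ := hPL
      set m := d i - d' i with hmdef
      have hmL : m ≤ L := by omega
      have hHDm : HD ((X.drop (d' i)).take m) ((Y.drop d'').take m) ≤ k := by
        have e1 : (X.drop (d' i)).take m = ((X.drop (d' i)).take L).take m := by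
          rw [List.take_take, min_eq_left hmL]
        have e2 : (Y.drop d'').take m = ((Y.drop d'').take L).take m := by
          rw [List.take_take, min_eq_left hmL]
        rw [e1, e2]
        exact le_trans (HD_take ..) hP3
      have hlenA : ((X.drop (d' i)).take m).length = m := by simp; omega
      have hlenB : ((Y.drop d'').take m).length = m := by simp; omega
      have hEDmid : ED ((X.drop (d' i)).take m) ((Y.drop d'').take m) ≤ k := by
        have := ED_le_HD ((X.drop (d' i)).take m) ((Y.drop d'').take m)
        rw [hlenA, hlenB] at this
        omega
      have hXdec : X.take (d i) = X.take (d' i) ++ (X.drop (d' i)).take m := by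
        rw [← List.take_add]; congr 1; omega
      have hYdec : Y.take (d'' + m) = Y.take d'' ++ (Y.drop d'').take m := by
        rw [← List.take_add]
      have hYlen : d'' ≤ Y.length := by omega
      have hEDfront := hA d'' (by omega) (by omega) hYlen
      have ht_le : d'' + m ≤ Y.length := by omega
      have hEDt : ED (X.take (d i)) (Y.take (d'' + m)) ≤ (3 * k + 1) * i + 2 * k := by
        rw [hXdec, hYdec]
        have := ED_append (X.take (d' i)) (Y.take d'') ((X.drop (d' i)).take m)
          ((Y.drop d'').take m)
        omega
      intro y h1 h2 h3
      have hfin := ED_take_take (X.take (d i)) Y y (d'' + m) h3 ht_le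
      omega
  have keyA : ∀ i, i + 1 ≤ k →
      (∀ y : ℕ, (d i : ℤ) - k ≤ (y : ℤ) → (y : ℤ) ≤ (d i : ℤ) + k → y ≤ Y.length →
        ED (X.take (d i)) (Y.take y) ≤ (3 * k + 1) * i + 4 * k) →
      (∀ y : ℕ, (d' (i+1) : ℤ) - k ≤ (y : ℤ) → (y : ℤ) ≤ (d' (i+1) : ℤ) + k → y ≤ Y.length →
        ED (X.take (d' (i+1))) (Y.take y) ≤ (3 * k + 1) * (i+1) + k) := by
    intro i hi hB
    have hik : i ≤ k := by omega
    have hstepi := hstep i hik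
    have hdXi := hdX i hik
    have hring : (3 * k + 1) * (i + 1) = (3 * k + 1) * i + 3 * k + 1 := by ring
    by_cases hc : d i + 1 ≤ X.length
    · have hd'1 : d' (i + 1) = d i + 1 := by omega
      intro y h1 h2 h3
      rw [hd'1] at h1 h2 ⊢
      rcases Nat.eq_zero_or_pos y with hy | hy
      · subst hy
        simp only [List.take_zero]
        rw [ED_nil_right]
        have hlen : (X.take (d i + 1)).length = d i + 1 := by simp; omega
        omega
      · have hfront := hB (y - 1) (by omega) (by omega) (by omega)
        have hx : d i < X.length := by omega
        have hy1 : y - 1 < Y.length := by omega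
        have hXd : X.take (d i + 1) = X.take (d i) ++ [X[d i]] := by
          rw [List.take_succ]; congr 1
          rw [List.getElem?_eq_getElem hx]; rfl
        have hYd : Y.take y = Y.take (y - 1) ++ [Y[y - 1]] := by
          conv_lhs => rw [show y = (y - 1) + 1 by omega]
          rw [List.take_succ]; congr 1
          rw [List.getElem?_eq_getElem hy1]; rfl
        rw [hXd, hYd]
        have h4 := ED_append (X.take (d i)) (Y.take (y - 1)) [X[d i]] [Y[y - 1]]
        have h5 := ED_single (X[d i]) (Y[y - 1])
        omega
    · have hd'1 : d' (i + 1) = d i := by omega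
      intro y h1 h2 h3
      rw [hd'1] at h1 h2 ⊢
      have := hB y h1 h2 h3
      omega
  have base : ∀ y : ℕ, (d' 0 : ℤ) - k ≤ (y : ℤ) → (y : ℤ) ≤ (d' 0 : ℤ) + k → y ≤ Y.length →
      ED (X.take (d' 0)) (Y.take y) ≤ (3 * k + 1) * 0 + k := by
    intro y h1 h2 h3
    rw [h0] at h2 ⊢
    simp only [List.take_zero]
    rw [ED_nil_left]
    have hlen : (Y.take y).length = y := by simp; omega
    omega
  intro i
  induction i with
  | zero => intro hk; exact ⟨base, keyB 0 hk base⟩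
  | succ j ih =>
    intro hk
    have hj : j ≤ k := by omega
    have hAj := (ih hj).1
    have hBj := keyB j hj hAj
    have hAj1 := keyA j hk hBj
    exact ⟨hAj1, keyB (j + 1) hk hAj1⟩
end

section
/- Let X, X', and Y be strings over an alphabet Σ, let r > 0 be a real parameter, and let j ∈ [0..|Y|−|X|] be an integer. Let (Ω, P) be a probability space and let L₁, L₂ : Ω → ℕ be independent random variables such that: L₁(ω) ≥ LCE_0^{X,Y}(0,j) for all ω and P[L₁ > LCE_k^{X,Y}(0,j)] ≤ exp(−(k+1)/r) for every integer k ≥ 0; and L₂(ω) ≥ LCE_0^{X',Y}(0,j+|X|) for all ω and P[L₂ > LCE_k^{X',Y}(0,j+|X|)] ≤ exp(−(k+1)/r) for every integer k ≥ 0. Define L : Ω → ℕ by L(ω) = L₁(ω) if L₁(ω) < |X|, and L(ω) = |X| + L₂(ω) otherwise. Then L(ω) ≥ LCE_0^{XX',Y}(0,j) for all ω, and P[L > LCE_k^{XX',Y}(0,j)] ≤ exp(−(k+1)/r) for every integer k ≥ 0, where XX' denotes the concatenation of X and X'. -/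
lemma zip_take' {α : Type*} (A B : List α) (n : ℕ) :
    (A.take n).zip (B.take n) = (A.zip B).take n := by
  induction A generalizing B n with
  | nil => simp
  | cons a A ih =>
    cases B with
    | nil => simp
    | cons b B =>
      cases n with
      | zero => simp
      | succ n => simp [ih]

lemma HD_mono {α : Type*} [DecidableEq α] (A B : List α) {m n : ℕ} (h : m ≤ n) :
    HD (A.take m) (B.take m) ≤ HD (A.take n) (B.take n) := by
  unfold HD
  have h1 : (A.take m).zip (B.take m) = ((A.take n).zip (B.take n)).take m := by
    rw [zip_take', zip_take', List.take_take, min_eq_left h]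
  rw [h1]
  exact ((List.take_sublist _ _).filter _).length_le

lemma HD_append {α : Type*} [DecidableEq α] (A₁ A₂ B₁ B₂ : List α)
    (h : A₁.length = B₁.length) :
    HD (A₁ ++ A₂) (B₁ ++ B₂) = HD A₁ B₁ + HD A₂ B₂ := by
  unfold HD
  rw [List.zip_append h, List.filter_append, List.length_append]

/-- normal form of LCE at positions (0, p). -/
def FG {α : Type*} [DecidableEq α] (Z Y : List α) (p k : ℕ) : ℕ :=
  Nat.findGreatest
    (fun ℓ => ℓ ≤ Z.length ∧ ℓ ≤ Y.length - p ∧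
      HD (Z.take ℓ) ((Y.drop p).take ℓ) ≤ k)
    (min Z.length (Y.length - p))

lemma lce_eq_FG {α : Type*} [DecidableEq α] (Z Y : List α) (p k : ℕ)
    (hp : p ≤ Y.length) : LCE k Z Y 0 (p : ℤ) = FG Z Y p k := by
  unfold LCE FG
  rw [if_pos]
  · simp only [Int.toNat_natCast, Int.toNat_zero, Nat.sub_zero, List.drop_zero]
  · exact ⟨le_refl 0, Int.ofNat_nonneg _, Int.ofNat_nonneg _, by exact_mod_cast hp⟩

lemma FG_spec {α : Type*} [DecidableEq α] (Z Y : List α) (p k : ℕ) :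
    FG Z Y p k ≤ Z.length ∧ FG Z Y p k ≤ Y.length - p ∧
      HD (Z.take (FG Z Y p k)) ((Y.drop p).take (FG Z Y p k)) ≤ k := by
  exact Nat.findGreatest_spec
    (P := fun ℓ => ℓ ≤ Z.length ∧ ℓ ≤ Y.length - p ∧
      HD (Z.take ℓ) ((Y.drop p).take ℓ) ≤ k)
    (Nat.zero_le _) ⟨Nat.zero_le _, Nat.zero_le _, by simp [HD]⟩

lemma le_FG {α : Type*} [DecidableEq α] {Z Y : List α} {p k m : ℕ}
    (h1 : m ≤ Z.length) (h2 : m ≤ Y.length - p)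
    (h3 : HD (Z.take m) ((Y.drop p).take m) ≤ k) : m ≤ FG Z Y p k :=
  Nat.le_findGreatest
    (P := fun ℓ => ℓ ≤ Z.length ∧ ℓ ≤ Y.length - p ∧
      HD (Z.take ℓ) ((Y.drop p).take ℓ) ≤ k)
    (le_min h1 h2) ⟨h1, h2, h3⟩

lemma FG_le {α : Type*} [DecidableEq α] (Z Y : List α) (p k : ℕ) :
    FG Z Y p k ≤ min Z.length (Y.length - p) := Nat.findGreatest_le _

section Core
variable {α : Type*} [DecidableEq α] (X X' Y : List α) (j : ℕ)

/-- splitting identity for HD of a prefix of `X ++ X'` longer than `X`. -/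
lemma hd_split (hj : j + X.length ≤ Y.length) (m : ℕ)
    (hm : X.length + m ≤ Y.length - j) :
    HD ((X ++ X').take (X.length + m)) ((Y.drop j).take (X.length + m))
      = HD X ((Y.drop j).take X.length)
        + HD (X'.take m) ((Y.drop (j + X.length)).take m) := by
  have h1 : (X ++ X').take (X.length + m) = X ++ X'.take m := by
    rw [List.take_append, List.take_of_length_le (by omega), Nat.add_sub_cancel_left]
  have h2 : (Y.drop j).take (X.length + m)
      = (Y.drop j).take X.length ++ ((Y.drop (j + X.length)).take m) := by
    rw [List.take_add, List.drop_drop]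
  rw [h1, h2, HD_append]
  simp only [List.length_take, List.length_drop]
  omega

lemma take_prefix_eq (ℓ : ℕ) (hℓ : ℓ ≤ X.length) :
    HD ((X ++ X').take ℓ) ((Y.drop j).take ℓ) = HD (X.take ℓ) ((Y.drop j).take ℓ) := by
  rw [List.take_append_of_le_length hℓ]

lemma c1 (hj : j + X.length ≤ Y.length) (k : ℕ) :
    FG X Y j k ≤ FG (X ++ X') Y j k := by
  obtain ⟨s1, s2, s3⟩ := FG_spec X Y j k
  refine le_FG ?_ s2 ?_
  · rw [List.length_append]; omega
  · rw [take_prefix_eq X X' Y j _ s1]; exact s3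

lemma c4 {k : ℕ} (hk : k < HD X ((Y.drop j).take X.length)) :
    FG (X ++ X') Y j k < X.length := by
  by_contra hn
  push_neg at hn
  obtain ⟨s1, s2, s3⟩ := FG_spec (X ++ X') Y j k
  have := HD_mono (X ++ X') (Y.drop j) hn
  rw [List.take_append_of_le_length (le_refl X.length), List.take_length] at this
  omega

lemma c5 {k : ℕ} (hk : k < HD X ((Y.drop j).take X.length)) :
    FG X Y j k < X.length := by
  by_contra hn
  push_neg at hn
  obtain ⟨s1, s2, s3⟩ := FG_spec X Y j k
  have h := HD_mono X (Y.drop j) hn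
  rw [List.take_length] at h
  omega

lemma c2 {k : ℕ} (hc : FG (X ++ X') Y j k < X.length) (hj : j + X.length ≤ Y.length) :
    FG (X ++ X') Y j k = FG X Y j k := by
  refine le_antisymm ?_ (c1 X X' Y j hj k)
  obtain ⟨s1, s2, s3⟩ := FG_spec (X ++ X') Y j k
  refine le_FG (le_of_lt hc) s2 ?_
  rw [← take_prefix_eq X X' Y j _ (le_of_lt hc)]; exact s3

lemma c6 {k : ℕ} (hk : HD X ((Y.drop j).take X.length) ≤ k)
    (hj : j + X.length ≤ Y.length) : FG X Y j k = X.length := by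
  refine le_antisymm ?_ ?_
  · exact (FG_le X Y j k).trans (min_le_left _ _)
  · refine le_FG (le_refl _) (by omega) ?_
    rw [List.take_length]; exact hk

lemma c3 {k : ℕ} (hk : HD X ((Y.drop j).take X.length) ≤ k)
    (hj : j + X.length ≤ Y.length) :
    FG (X ++ X') Y j k
      = X.length + FG X' Y (j + X.length) (k - HD X ((Y.drop j).take X.length)) := by
  set D := HD X ((Y.drop j).take X.length) with hD
  set b := FG X' Y (j + X.length) (k - D) with hb
  obtain ⟨t1, t2, t3⟩ := FG_spec X' Y (j + X.length) (k - D)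
  rw [← hb] at t1 t2 t3
  refine le_antisymm ?_ ?_
  · obtain ⟨s1, s2, s3⟩ := FG_spec (X ++ X') Y j k
    rw [List.length_append] at s1
    rcases le_or_gt (FG (X ++ X') Y j k) X.length with h | h
    · omega
    · set c := FG (X ++ X') Y j k with hc
      have hcm : c = X.length + (c - X.length) := by omega
      rw [hcm, hd_split X X' Y j hj _ (by omega)] at s3
      have : c - X.length ≤ b := le_FG (by omega) (by omega) (by omega)
      omega
  · refine le_FG ?_ (by omega) ?_
    · rw [List.length_append]; omega
    · rw [hd_split X X' Y j hj b (by omega)]; omega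

end Core

open MeasureTheory ProbabilityTheory in
theorem stmt8 {α : Type*} [DecidableEq α] (X X' Y : List α) (r : ℝ) (hr : 0 < r)
    (j : ℕ) (hj : j + X.length ≤ Y.length)
    {Ω : Type*} [MeasurableSpace Ω] (P : Measure Ω) [IsProbabilityMeasure P]
    (L₁ L₂ : Ω → ℕ)
    (hindep : IndepFun L₁ L₂ P)
    (h1lb : ∀ ω, LCE 0 X Y 0 (j : ℤ) ≤ L₁ ω)
    (h1ub : ∀ k : ℕ, P {ω | LCE k X Y 0 (j : ℤ) < L₁ ω} ≤
      ENNReal.ofReal (Real.exp (-((k : ℝ) + 1) / r)))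
    (h2lb : ∀ ω, LCE 0 X' Y 0 ((j : ℤ) + X.length) ≤ L₂ ω)
    (h2ub : ∀ k : ℕ, P {ω | LCE k X' Y 0 ((j : ℤ) + X.length) < L₂ ω} ≤
      ENNReal.ofReal (Real.exp (-((k : ℝ) + 1) / r)))
    (L : Ω → ℕ)
    (hL : ∀ ω, L ω = if L₁ ω < X.length then L₁ ω else X.length + L₂ ω) :
    (∀ ω, LCE 0 (X ++ X') Y 0 (j : ℤ) ≤ L ω) ∧
    (∀ k : ℕ, P {ω | LCE k (X ++ X') Y 0 (j : ℤ) < L ω} ≤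
      ENNReal.ofReal (Real.exp (-((k : ℝ) + 1) / r))) := by
  have hjY : j ≤ Y.length := by omega
  have hAk : ∀ k, LCE k X Y 0 (j : ℤ) = FG X Y j k := fun k => lce_eq_FG X Y j k hjY
  have hBk : ∀ k, LCE k X' Y 0 ((j : ℤ) + X.length) = FG X' Y (j + X.length) k := by
    intro k
    have hcast : ((j : ℤ) + X.length) = ((j + X.length : ℕ) : ℤ) := by push_cast; ring
    rw [hcast, lce_eq_FG X' Y (j + X.length) k hj]
  have hCk : ∀ k, LCE k (X ++ X') Y 0 (j : ℤ) = FG (X ++ X') Y j k :=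
    fun k => lce_eq_FG (X ++ X') Y j k hjY
  set D := HD X ((Y.drop j).take X.length) with hD
  constructor
  · intro ω
    rw [hCk 0, hL ω]
    rcases lt_or_ge (L₁ ω) X.length with h1 | h1
    · rw [if_pos h1]
      have hD1 : 1 ≤ D := by
        by_contra hc; push_neg at hc
        have h6 := c6 X Y j (k := 0) (by omega) hj
        have := h1lb ω; rw [hAk 0] at this; omega
      have hc := c4 X X' Y j (k := 0) (by omega)
      rw [c2 X X' Y j hc hj]
      have := h1lb ω; rw [hAk 0] at this; omega
    · rw [if_neg (not_lt.mpr h1)]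
      rcases Nat.eq_zero_or_pos D with h0 | h0
      · rw [c3 X X' Y j (k := 0) (by omega) hj]
        have := h2lb ω; rw [hBk 0] at this
        have h00 : (0 : ℕ) - D = 0 := by omega
        rw [← hD, h00] at *
        omega
      · have := c4 X X' Y j (k := 0) h0; omega
  · intro k
    rcases lt_or_ge k D with hkD | hkD
    · refine le_trans (measure_mono ?_) (h1ub k)
      intro ω hω
      simp only [Set.mem_setOf_eq] at hω ⊢
      rw [hCk k, c2 X X' Y j (c4 X X' Y j hkD) hj, hL ω] at hω
      rw [hAk k]
      have hc5 := c5 X Y j hkD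
      rcases lt_or_ge (L₁ ω) X.length with h1 | h1
      · rw [if_pos h1] at hω; exact hω
      · rw [if_neg (not_lt.mpr h1)] at hω; omega
    · have hsub : {ω | LCE k (X ++ X') Y 0 (j : ℤ) < L ω} ⊆
          (L₁ ⁻¹' {t | X.length ≤ t}) ∩
          (L₂ ⁻¹' {t | FG X' Y (j + X.length) (k - D) < t}) := by
        intro ω hω
        simp only [Set.mem_setOf_eq] at hω
        rw [hCk k, c3 X X' Y j hkD hj, ← hD, hL ω] at hω
        have h1 : X.length ≤ L₁ ω := by
          by_contra hc; push_neg at hc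
          rw [if_pos hc] at hω; omega
        rw [if_neg (not_lt.mpr h1)] at hω
        exact ⟨h1, by simpa using (by omega : FG X' Y (j + X.length) (k - D) < L₂ ω)⟩
      rcases Nat.eq_zero_or_pos D with h0 | h0
      · refine le_trans (measure_mono ?_) (by simpa [h0] using h2ub (k - D))
        refine hsub.trans ?_
        intro ω hω
        simp only [Set.mem_setOf_eq, Set.mem_inter_iff, Set.mem_preimage] at hω ⊢
        rw [hBk k]
        simpa [h0] using hω.2
      · have hm1 : MeasurableSet {t : ℕ | X.length ≤ t} := by
          exact (Set.to_countable _).measurableSet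
        have hm2 : MeasurableSet {t : ℕ | FG X' Y (j + X.length) (k - D) < t} := by
          exact (Set.to_countable _).measurableSet
        have hprod := hindep.measure_inter_preimage_eq_mul _ _ hm1 hm2
        refine le_trans (measure_mono hsub) ?_
        rw [hprod]
        have hb1 : P (L₁ ⁻¹' {t | X.length ≤ t}) ≤
            ENNReal.ofReal (Real.exp (-(((D - 1 : ℕ) : ℝ) + 1) / r)) := by
          refine le_trans (measure_mono ?_) (h1ub (D - 1))
          intro ω hω
          simp only [Set.mem_preimage, Set.mem_setOf_eq] at hω ⊢
          rw [hAk (D - 1)]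
          have hc5 := c5 X Y j (k := D - 1) (by omega)
          omega
        have hb2 : P (L₂ ⁻¹' {t | FG X' Y (j + X.length) (k - D) < t}) ≤
            ENNReal.ofReal (Real.exp (-(((k - D : ℕ) : ℝ) + 1) / r)) := by
          refine le_trans (measure_mono ?_) (h2ub (k - D))
          intro ω hω
          simp only [Set.mem_preimage, Set.mem_setOf_eq] at hω ⊢
          rw [hBk (k - D)]
          exact hω
        refine le_trans (mul_le_mul' hb1 hb2) ?_
        rw [← ENNReal.ofReal_mul (Real.exp_nonneg _), ← Real.exp_add]
        refine le_of_eq ?_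
        congr 1
        rw [← add_div]
        congr 1
        push_cast [Nat.cast_sub h0, Nat.cast_sub hkD]
        ring
end
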